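/- Let $\mu$ be a finite complex Borel measure on $\mathbb{C}$ satisfying $\int_{|z|>10}|z|\log|z|\,d|\mu|(z) < \infty$, and set $A = \int d\mu$ and $B = \int w\,d\mu(w)$. Then the Cauchy transform $\hat\mu$ is absolutely integrable on $\{|z| > 1\}$ with respect to planar Lebesgue measure if and only if $A = 0$ and $B = 0$. -/

import Mathlib

/-!
Write `H(z) = ∫ w² dμ(w) / (z² (w - z))`. The partial fractions identity
`1 / (w - z) = -1/z - w/z² + w² / (z² (w - z))` gives `μ̂(z) = -A/z - B/z² + H(z)` for `z ≠ 0`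
off the (countably many) atoms of `|μ|`. By Tonelli, `H` is integrable on `{|z| > 1}` since
`∫_{|z|>1} |w|² / (|z|² |w - z|) dz ≲ |w| (1 + log⁺ |w|)`, a `|μ|`-integrable function by the
hypothesis. This bound follows by splitting the plane into `|z| < |w|/2`, `|z| > 2|w|` and the
rest, and integrating in polar coordinates; the `log⁺` comes from `∫_{1<|z|<|w|/2} |z|⁻² dz`.
Hence `μ̂` is integrable iff `A/z + B/z²` is, and `|A z + B| / |z|²` is bounded below by a
multiple of the non-integrable `|z|⁻²` near infinity unless `A = B = 0`.
-/

open MeasureTheory Real Set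
open scoped ENNReal

/-- Integrating over all of `ℝ` is harmless since `ENNReal.ofReal r = 0` for `r ≤ 0`. -/
lemma Complex.lintegral_comp_norm (f : ℝ → ℝ≥0∞) (hf : Measurable f) :
    ∫⁻ z : ℂ, f ‖z‖ = ENNReal.ofReal (2 * π) * ∫⁻ r, ENNReal.ofReal r * f r := by
  have hzero : ∀ r : ℝ, ENNReal.ofReal r * f |r| = ENNReal.ofReal r * f r := fun r => by
    rcases le_or_gt r 0 with hr | hr
    · simp [ENNReal.ofReal_of_nonpos hr]
    · rw [abs_of_pos hr]
  rw [← Complex.lintegral_comp_polarCoord_symm, polarCoord_target]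
  simp only [Complex.norm_polarCoord_symm, smul_eq_mul, hzero]
  rw [Measure.volume_eq_prod, ← Measure.prod_restrict,
    lintegral_prod (fun p : ℝ × ℝ => ENNReal.ofReal p.1 * f p.1)
      (measurable_fst.ennreal_ofReal.mul (hf.comp measurable_fst)).aemeasurable]
  simp only [lintegral_const, Measure.restrict_apply_univ, Real.volume_Ioo, sub_neg_eq_add,
    ← two_mul]
  rw [lintegral_mul_const' _ _ ENNReal.ofReal_ne_top, mul_comm,
    setLIntegral_eq_of_support_subset]
  intro r hr
  by_contra h
  simp_all [ENNReal.ofReal_of_nonpos (not_lt.1 h)]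

lemma Complex.setLIntegral_comp_norm (f : ℝ → ℝ≥0∞) (hf : Measurable f) {s : Set ℝ}
    (hs : MeasurableSet s) :
    ∫⁻ z in {z : ℂ | ‖z‖ ∈ s}, f ‖z‖ =
      ENNReal.ofReal (2 * π) * ∫⁻ r in s, ENNReal.ofReal r * f r := by
  rw [← lintegral_indicator (s := {z : ℂ | ‖z‖ ∈ s}) (measurable_norm hs),
    ← lintegral_indicator hs]
  simp only [indicator_mul_right]
  exact Complex.lintegral_comp_norm (s.indicator f) (hf.indicator hs)

lemma Complex.setLIntegral_inv_norm_pow_three (m : ℝ) (hm : 0 < m) :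
    ∫⁻ z in {z : ℂ | m < ‖z‖}, ENNReal.ofReal (‖z‖ ^ 3)⁻¹ = ENNReal.ofReal (2 * π / m) := by
  have hpow : ∀ r ∈ Ioi m, ENNReal.ofReal r * ENNReal.ofReal (r ^ 3)⁻¹
      = ENNReal.ofReal (r ^ (-2 : ℝ)) := fun r (hr : m < r) => by
    have hr0 : 0 < r := hm.trans hr
    rw [← ENNReal.ofReal_mul hr0.le, rpow_neg hr0.le, rpow_two]
    congr 1
    field_simp
  rw [show {z : ℂ | m < ‖z‖} = {z | ‖z‖ ∈ Ioi m} from rfl,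
    setLIntegral_comp_norm (fun r => ENNReal.ofReal (r ^ 3)⁻¹) (by fun_prop) measurableSet_Ioi,
    setLIntegral_congr_fun measurableSet_Ioi hpow,
    ← ofReal_integral_eq_lintegral_ofReal (integrableOn_Ioi_rpow_of_lt (by norm_num) hm)
      (ae_restrict_of_forall_mem measurableSet_Ioi fun r hr => rpow_nonneg (hm.trans hr).le _),
    integral_Ioi_rpow_of_lt (by norm_num) hm, ← ENNReal.ofReal_mul (by positivity)]
  norm_num [rpow_neg_one, div_eq_mul_inv]

lemma Complex.setLIntegral_inv_norm_sq_annulus (s : ℝ) (hs : 0 ≤ s) :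
    ∫⁻ z in {z : ℂ | 1 < ‖z‖ ∧ ‖z‖ < s}, ENNReal.ofReal (‖z‖ ^ 2)⁻¹ =
      ENNReal.ofReal (2 * π * log⁺ s) := by
  have hinv : ∀ r ∈ Ioo 1 s, ENNReal.ofReal r * ENNReal.ofReal (r ^ 2)⁻¹
      = ENNReal.ofReal r⁻¹ := fun r hr => by
    have hr0 : 0 < r := one_pos.trans hr.1
    rw [← ENNReal.ofReal_mul hr0.le]
    congr 1
    field_simp
  rw [show {z : ℂ | 1 < ‖z‖ ∧ ‖z‖ < s} = {z | ‖z‖ ∈ Ioo 1 s} from rfl,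
    setLIntegral_comp_norm (fun r => ENNReal.ofReal (r ^ 2)⁻¹) (by fun_prop) measurableSet_Ioo,
    setLIntegral_congr_fun measurableSet_Ioo hinv]
  rcases le_or_gt s 1 with hs1 | hs1
  · rw [Ioo_eq_empty hs1.not_gt, (posLog_eq_zero_iff s).2 (by rw [abs_of_nonneg hs]; exact hs1)]
    simp
  · have hint : IntegrableOn (fun r : ℝ => r⁻¹) (Ioo 1 s) :=
      (ContinuousOn.integrableOn_Icc (continuousOn_inv₀.mono fun r (hr : r ∈ Icc 1 s) =>
        (one_pos.trans_le hr.1).ne')).mono_set Ioo_subset_Icc_self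
    rw [← ofReal_integral_eq_lintegral_ofReal hint
      (ae_restrict_of_forall_mem measurableSet_Ioo fun r hr =>
        inv_nonneg.2 (one_pos.trans hr.1).le),
      ← integral_Ioc_eq_integral_Ioo, ← intervalIntegral.integral_of_le hs1.le,
      integral_inv_of_pos one_pos (one_pos.trans hs1), div_one,
      posLog_eq_log (by rw [abs_of_nonneg hs]; exact hs1.le), ← ENNReal.ofReal_mul (by positivity)]

lemma Complex.setLIntegral_inv_norm_sub_closedBall (w : ℂ) (t : ℝ) :
    ∫⁻ z in Metric.closedBall w t, ENNReal.ofReal ‖w - z‖⁻¹ = ENNReal.ofReal (2 * π * t) := by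
  have htrans : ∫⁻ z in Metric.closedBall w t, ENNReal.ofReal ‖w - z‖⁻¹ =
      ∫⁻ z in Metric.closedBall (0 : ℂ) t, ENNReal.ofReal ‖z‖⁻¹ := by
    have := (Measure.measurePreserving_sub_left volume w).setLIntegral_comp_preimage_emb
      (measurableEmbedding_subLeft w) (fun z => ENNReal.ofReal ‖z‖⁻¹) (Metric.closedBall 0 t)
    convert this using 3
    ext z
    simp only [mem_preimage, Metric.mem_closedBall, dist_eq_norm, norm_sub_rev, sub_zero]
  have hone : ∀ r : ℝ, ENNReal.ofReal r * ENNReal.ofReal r⁻¹ = (Ioi 0).indicator 1 r := by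
    intro r
    rcases le_or_gt r 0 with hr | hr
    · simp [ENNReal.ofReal_of_nonpos hr, hr.not_gt]
    · rw [← ENNReal.ofReal_mul hr.le, mul_inv_cancel₀ hr.ne']
      simp [hr]
  rw [htrans, show Metric.closedBall (0 : ℂ) t = {z | ‖z‖ ∈ Iic t} by ext; simp,
    setLIntegral_comp_norm (fun r => ENNReal.ofReal r⁻¹) (by fun_prop) measurableSet_Iic]
  simp only [hone]
  rw [lintegral_indicator_one measurableSet_Ioi, Measure.restrict_apply measurableSet_Ioi,
    Ioi_inter_Iic, Real.volume_Ioc, sub_zero, ← ENNReal.ofReal_mul (by positivity)]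

lemma Complex.setLIntegral_inv_norm_sq_eq_top (R : ℝ) (hR : 0 ≤ R) :
    ∫⁻ z in {z : ℂ | R < ‖z‖}, ENNReal.ofReal (‖z‖ ^ 2)⁻¹ = ⊤ := by
  have hinv : ∀ r : ℝ, ENNReal.ofReal r * ENNReal.ofReal (r ^ 2)⁻¹ = ENNReal.ofReal r⁻¹ := by
    intro r
    rcases le_or_gt r 0 with hr | hr
    · simp [ENNReal.ofReal_of_nonpos hr, ENNReal.ofReal_of_nonpos (inv_nonpos.2 hr)]
    · rw [← ENNReal.ofReal_mul hr.le]
      congr 1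
      field_simp
  have hdiv : ∫⁻ r in Ioi R, ENNReal.ofReal r⁻¹ = ⊤ := by
    by_contra h
    refine not_integrableOn_Ioi_inv ((lintegral_ofReal_ne_top_iff_integrable
      measurable_inv.aestronglyMeasurable ?_).1 h)
    exact ae_restrict_of_forall_mem measurableSet_Ioi fun r hr => inv_nonneg.2 (hR.trans hr.le)
  rw [show {z : ℂ | R < ‖z‖} = {z | ‖z‖ ∈ Ioi R} from rfl,
    setLIntegral_comp_norm (fun r => ENNReal.ofReal (r ^ 2)⁻¹) (by fun_prop) measurableSet_Ioi]
  simp only [hinv, hdiv]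
  exact ENNReal.mul_top (by positivity)

/-- The modulus of the integrand `w² / (z² (w - z))` of the remainder `H(z)`
(with the junk value `0` at `w = z` and at `z = 0`, as for the integrand itself). -/
noncomputable def cauchyRemainderKernel (w z : ℂ) : ℝ := ‖w‖ ^ 2 / (‖z‖ ^ 2 * ‖w - z‖)

@[fun_prop]
lemma Measurable.cauchyRemainderKernel {α : Type*} [MeasurableSpace α] {f g : α → ℂ}
    (hf : Measurable f) (hg : Measurable g) :
    Measurable fun x => cauchyRemainderKernel (f x) (g x) := by
  unfold _root_.cauchyRemainderKernel; fun_prop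

namespace cauchyRemainderKernel

lemma le_of_lt_half {w z : ℂ} (hz : ‖z‖ < ‖w‖ / 2) :
    cauchyRemainderKernel w z ≤ 2 * ‖w‖ * (‖z‖ ^ 2)⁻¹ := by
  have hw : 0 < ‖w‖ := by linarith [norm_nonneg z]
  have hdist : ‖w‖ / 2 ≤ ‖w - z‖ := by linarith [norm_sub_norm_le w z]
  calc cauchyRemainderKernel w z = ‖w‖ ^ 2 * (‖z‖ ^ 2)⁻¹ * ‖w - z‖⁻¹ := by
        rw [cauchyRemainderKernel, div_eq_mul_inv, mul_inv, ← mul_assoc]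
    _ ≤ ‖w‖ ^ 2 * (‖z‖ ^ 2)⁻¹ * (‖w‖ / 2)⁻¹ := by gcongr
    _ = 2 * ‖w‖ * (‖z‖ ^ 2)⁻¹ := by field_simp

lemma le_of_half_le {w z : ℂ} (hz : ‖w‖ / 2 ≤ ‖z‖) :
    cauchyRemainderKernel w z ≤ 4 * ‖w - z‖⁻¹ := by
  rcases (norm_nonneg z).eq_or_lt with hz0 | hz0
  · simp [cauchyRemainderKernel, ← hz0]
  have hquot : (‖w‖ / ‖z‖) ^ 2 ≤ 4 := by
    rw [div_pow, div_le_iff₀ (by positivity)]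
    nlinarith [norm_nonneg w]
  calc cauchyRemainderKernel w z = (‖w‖ / ‖z‖) ^ 2 * ‖w - z‖⁻¹ := by
        rw [cauchyRemainderKernel, div_pow, div_mul_eq_div_div, div_eq_mul_inv]
    _ ≤ 4 * ‖w - z‖⁻¹ := by gcongr

lemma le_of_two_mul_lt {w z : ℂ} (hz : 2 * ‖w‖ < ‖z‖) :
    cauchyRemainderKernel w z ≤ 2 * ‖w‖ ^ 2 * (‖z‖ ^ 3)⁻¹ := by
  have hz0 : 0 < ‖z‖ := by linarith [norm_nonneg w]
  have hdist : ‖z‖ / 2 ≤ ‖w - z‖ := by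
    rw [norm_sub_rev]; linarith [norm_sub_norm_le z w]
  calc cauchyRemainderKernel w z ≤ ‖w‖ ^ 2 / (‖z‖ ^ 2 * (‖z‖ / 2)) := by
        unfold cauchyRemainderKernel; gcongr
    _ = 2 * ‖w‖ ^ 2 * (‖z‖ ^ 3)⁻¹ := by field_simp

lemma setLIntegral_inner_le (w : ℂ) :
    ∫⁻ z in {z : ℂ | 1 < ‖z‖ ∧ ‖z‖ < ‖w‖ / 2}, ENNReal.ofReal (cauchyRemainderKernel w z) ≤
      ENNReal.ofReal (4 * π * (‖w‖ * log⁺ ‖w‖)) := by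
  have hlog : log⁺ (‖w‖ / 2) ≤ log⁺ ‖w‖ :=
    posLog_le_posLog (by positivity) (by linarith [norm_nonneg w])
  calc _ ≤ ∫⁻ z in {z : ℂ | 1 < ‖z‖ ∧ ‖z‖ < ‖w‖ / 2},
          ENNReal.ofReal (2 * ‖w‖) * ENNReal.ofReal (‖z‖ ^ 2)⁻¹ := by
        refine setLIntegral_mono (by fun_prop) fun z hz => ?_
        rw [← ENNReal.ofReal_mul (by positivity)]
        exact ENNReal.ofReal_le_ofReal (le_of_lt_half hz.2)
    _ = ENNReal.ofReal (2 * ‖w‖) * ENNReal.ofReal (2 * π * log⁺ (‖w‖ / 2)) := by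
        rw [lintegral_const_mul _ (by fun_prop),
          Complex.setLIntegral_inv_norm_sq_annulus _ (by positivity)]
    _ ≤ ENNReal.ofReal (4 * π * (‖w‖ * log⁺ ‖w‖)) := by
        rw [← ENNReal.ofReal_mul (by positivity)]
        refine ENNReal.ofReal_le_ofReal ?_
        have := mul_le_mul_of_nonneg_left hlog (by positivity : 0 ≤ 4 * π * ‖w‖)
        linarith

lemma setLIntegral_middle_le (w : ℂ) :
    ∫⁻ z in Metric.closedBall w (3 * ‖w‖) ∩ {z : ℂ | ‖w‖ / 2 ≤ ‖z‖},
      ENNReal.ofReal (cauchyRemainderKernel w z) ≤ ENNReal.ofReal (24 * π * ‖w‖) :=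
  calc _ ≤ ∫⁻ z in Metric.closedBall w (3 * ‖w‖),
          ENNReal.ofReal 4 * ENNReal.ofReal ‖w - z‖⁻¹ := by
        refine (setLIntegral_mono (by fun_prop) fun z hz => ?_).trans
          (lintegral_mono_set inter_subset_left)
        rw [← ENNReal.ofReal_mul (by positivity)]
        exact ENNReal.ofReal_le_ofReal (le_of_half_le hz.2)
    _ = ENNReal.ofReal (24 * π * ‖w‖) := by
        rw [lintegral_const_mul _ (by fun_prop), Complex.setLIntegral_inv_norm_sub_closedBall,
          ← ENNReal.ofReal_mul (by positivity)]
        ring_nf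

lemma setLIntegral_outer_le (w : ℂ) :
    ∫⁻ z in {z : ℂ | max 1 (2 * ‖w‖) < ‖z‖}, ENNReal.ofReal (cauchyRemainderKernel w z) ≤
      ENNReal.ofReal (2 * π * ‖w‖) :=
  calc _ ≤ ∫⁻ z in {z : ℂ | max 1 (2 * ‖w‖) < ‖z‖},
          ENNReal.ofReal (2 * ‖w‖ ^ 2) * ENNReal.ofReal (‖z‖ ^ 3)⁻¹ := by
        refine setLIntegral_mono (by fun_prop) fun z hz => ?_
        rw [← ENNReal.ofReal_mul (by positivity)]
        exact ENNReal.ofReal_le_ofReal (le_of_two_mul_lt ((le_max_right _ _).trans_lt hz))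
    _ = ENNReal.ofReal (2 * ‖w‖ ^ 2 * (2 * π / max 1 (2 * ‖w‖))) := by
        rw [lintegral_const_mul _ (by fun_prop),
          Complex.setLIntegral_inv_norm_pow_three _ (by positivity),
          ← ENNReal.ofReal_mul (by positivity)]
    _ ≤ ENNReal.ofReal (2 * π * ‖w‖) := by
        refine ENNReal.ofReal_le_ofReal ?_
        rw [mul_div_assoc', div_le_iff₀ (by positivity)]
        rcases le_total 1 (2 * ‖w‖) with h | h
        · rw [max_eq_right h]; nlinarith [pi_pos, norm_nonneg w]
        · rw [max_eq_left h]
          nlinarith [mul_nonneg (mul_nonneg pi_pos.le (norm_nonneg w)) (sub_nonneg.2 h)]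

lemma setLIntegral_le (w : ℂ) :
    ∫⁻ z in {z : ℂ | 1 < ‖z‖}, ENNReal.ofReal (cauchyRemainderKernel w z) ≤
      ENNReal.ofReal (26 * π * (‖w‖ * (1 + log⁺ ‖w‖))) := by
  set f := fun z => ENNReal.ofReal (cauchyRemainderKernel w z)
  have hcover : {z : ℂ | 1 < ‖z‖} ⊆ ({z : ℂ | 1 < ‖z‖ ∧ ‖z‖ < ‖w‖ / 2} ∪
      Metric.closedBall w (3 * ‖w‖) ∩ {z : ℂ | ‖w‖ / 2 ≤ ‖z‖}) ∪
      {z : ℂ | max 1 (2 * ‖w‖) < ‖z‖} := by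
    intro z (hz : 1 < ‖z‖)
    by_cases hin : ‖z‖ < ‖w‖ / 2
    · exact Or.inl (Or.inl ⟨hz, hin⟩)
    by_cases hout : max 1 (2 * ‖w‖) < ‖z‖
    · exact Or.inr hout
    have hz2 : ‖z‖ ≤ 2 * ‖w‖ := (le_max_iff.1 (not_lt.1 hout)).resolve_left hz.not_ge
    refine Or.inl (Or.inr ⟨?_, not_lt.1 hin⟩)
    rw [Metric.mem_closedBall, dist_eq_norm]
    linarith [norm_sub_le z w]
  calc ∫⁻ z in {z : ℂ | 1 < ‖z‖}, f z
      ≤ (∫⁻ z in {z : ℂ | 1 < ‖z‖ ∧ ‖z‖ < ‖w‖ / 2}, f z) +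
        (∫⁻ z in Metric.closedBall w (3 * ‖w‖) ∩ {z : ℂ | ‖w‖ / 2 ≤ ‖z‖}, f z) +
        ∫⁻ z in {z : ℂ | max 1 (2 * ‖w‖) < ‖z‖}, f z :=
        (lintegral_mono_set hcover).trans ((lintegral_union_le _ _ _).trans
          (add_le_add_left (lintegral_union_le _ _ _) _))
    _ ≤ ENNReal.ofReal (4 * π * (‖w‖ * log⁺ ‖w‖)) + ENNReal.ofReal (24 * π * ‖w‖) +
        ENNReal.ofReal (2 * π * ‖w‖) :=
        add_le_add (add_le_add (setLIntegral_inner_le w) (setLIntegral_middle_le w))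
          (setLIntegral_outer_le w)
    _ ≤ ENNReal.ofReal (26 * π * (‖w‖ * (1 + log⁺ ‖w‖))) := by
        have : 0 ≤ ‖w‖ * log⁺ ‖w‖ := mul_nonneg (norm_nonneg w) posLog_nonneg
        rw [← ENNReal.ofReal_add (by positivity) (by positivity),
          ← ENNReal.ofReal_add (by positivity) (by positivity)]
        refine ENNReal.ofReal_le_ofReal ?_
        nlinarith [pi_pos, norm_nonneg w]

end cauchyRemainderKernel

lemma integrable_norm_mul_one_add_posLog {ρ : Measure ℂ} [IsFiniteMeasure ρ] {c : ℝ}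
    (hc : 1 < c)
    (h : IntegrableOn (fun w : ℂ => ‖w‖ * log ‖w‖) {w : ℂ | c < ‖w‖} ρ) :
    Integrable (fun w : ℂ => ‖w‖ * (1 + log⁺ ‖w‖)) ρ := by
  have hs : MeasurableSet {w : ℂ | c < ‖w‖} := measurableSet_lt measurable_const measurable_norm
  have hnonneg (w : ℂ) : 0 ≤ ‖w‖ * (1 + log⁺ ‖w‖) :=
    mul_nonneg (norm_nonneg w) (add_nonneg zero_le_one posLog_nonneg)
  have hmeas : AEStronglyMeasurable (fun w : ℂ => ‖w‖ * (1 + log⁺ ‖w‖)) ρ := by fun_prop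
  have hlarge : IntegrableOn (fun w : ℂ => ‖w‖ * (1 + log⁺ ‖w‖)) {w : ℂ | c < ‖w‖} ρ := by
    refine (h.const_mul ((log c)⁻¹ + 1)).mono' hmeas.restrict ?_
    filter_upwards [ae_restrict_mem hs] with w (hw : c < ‖w‖)
    have hlog : log c ≤ log ‖w‖ := log_le_log (by linarith) hw.le
    rw [norm_of_nonneg (hnonneg w), posLog_eq_log (by rw [abs_norm]; linarith)]
    have : 1 ≤ (log c)⁻¹ * log ‖w‖ := by rw [inv_mul_eq_div, le_div_iff₀ (log_pos hc)]; linarith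
    nlinarith [norm_nonneg w]
  have hsmall : IntegrableOn (fun w : ℂ => ‖w‖ * (1 + log⁺ ‖w‖)) {w : ℂ | c < ‖w‖}ᶜ ρ := by
    refine Measure.integrableOn_of_bounded (M := c * (1 + log⁺ c)) (measure_ne_top _ _)
      hmeas ?_
    filter_upwards [ae_restrict_mem hs.compl] with w hw
    have hwc : ‖w‖ ≤ c := not_lt.1 hw
    rw [norm_of_nonneg (hnonneg w)]
    gcongr
    exact add_nonneg zero_le_one posLog_nonneg
  simpa using hlarge.union hsmall

lemma lintegral_setLIntegral_cauchyRemainderKernel_lt_top {ρ : Measure ℂ} [SFinite ρ]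
    (h : Integrable (fun w : ℂ => ‖w‖ * (1 + log⁺ ‖w‖)) ρ) :
    ∫⁻ z in {z : ℂ | 1 < ‖z‖}, ∫⁻ w, ENNReal.ofReal (cauchyRemainderKernel w z) ∂ρ < ⊤ := by
  rw [lintegral_lintegral_swap (by fun_prop)]
  calc _ ≤ ∫⁻ w, ENNReal.ofReal (26 * π * (‖w‖ * (1 + log⁺ ‖w‖))) ∂ρ :=
        lintegral_mono fun w => cauchyRemainderKernel.setLIntegral_le w
    _ < ⊤ := (h.const_mul _).lintegral_lt_top

lemma ae_measure_singleton_eq_zero {α : Type*} [MeasurableSpace α] [MeasurableSingletonClass α]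
    (ρ ν : Measure α) [SFinite ρ] [NullSingletonClass ν] : ∀ᵐ z ∂ν, ρ {z} = 0 := by
  refine measure_mono_null (fun z hz => ?_)
    ((Measure.countable_meas_level_set_pos (μ := ρ) measurable_id).measure_zero ν)
  simpa [pos_iff_ne_zero] using hz

lemma exists_pos_le_norm_mul_add {A B : ℂ} (hAB : ¬(A = 0 ∧ B = 0)) :
    ∃ c > 0, ∃ R : ℝ, ∀ z : ℂ, R < ‖z‖ → c ≤ ‖A * z + B‖ := by
  by_cases hA : A = 0
  · have hB : B ≠ 0 := fun hB => hAB ⟨hA, hB⟩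
    exact ⟨‖B‖, norm_pos_iff.2 hB, 0, fun z _ => by simp [hA]⟩
  have hA' : 0 < ‖A‖ := norm_pos_iff.2 hA
  refine ⟨‖A‖, hA', (‖A‖ + ‖B‖) / ‖A‖, fun z hz => ?_⟩
  rw [div_lt_iff₀' hA'] at hz
  have : ‖A * z‖ ≤ ‖A * z + B‖ + ‖B‖ := by
    simpa using norm_sub_le (A * z + B) B
  rw [norm_mul] at this
  linarith

lemma integrableOn_div_add_div_sq_iff (A B : ℂ) (R : ℝ) :
    IntegrableOn (fun z : ℂ => A / z + B / z ^ 2) {z : ℂ | R < ‖z‖} ↔ A = 0 ∧ B = 0 := by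
  refine ⟨fun hint => ?_, by rintro ⟨rfl, rfl⟩; simp⟩
  by_contra hAB
  obtain ⟨c, hc, R₀, hR₀⟩ := exists_pos_le_norm_mul_add hAB
  set R₁ := max R (max R₀ 0)
  have hR₁ : 0 ≤ R₁ := (le_max_right _ _).trans (le_max_right _ _)
  have hsub : {z : ℂ | R₁ < ‖z‖} ⊆ {z : ℂ | R < ‖z‖} := fun z (hz : R₁ < ‖z‖) =>
    show R < ‖z‖ from (le_max_left _ _).trans_lt hz
  have hlower : ∀ z ∈ {z : ℂ | R₁ < ‖z‖},
      ENNReal.ofReal c * ENNReal.ofReal (‖z‖ ^ 2)⁻¹ ≤ ‖A / z + B / z ^ 2‖ₑ := by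
    intro z (hz : R₁ < ‖z‖)
    have hz0 : z ≠ 0 := norm_pos_iff.1 (hR₁.trans_lt hz)
    have hzR₀ : R₀ < ‖z‖ := ((le_max_left _ _).trans (le_max_right _ _)).trans_lt hz
    rw [← ENNReal.ofReal_mul hc.le, ← ofReal_norm, show A / z + B / z ^ 2 = (A * z + B) / z ^ 2 by
      field_simp, norm_div, norm_pow, ← div_eq_mul_inv]
    exact ENNReal.ofReal_le_ofReal (by gcongr; exact hR₀ z hzR₀)
  have htop := (setLIntegral_mono' (measurableSet_lt measurable_const measurable_norm)
    hlower).trans_lt (hint.mono_set hsub).2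
  rw [lintegral_const_mul _ (by fun_prop), Complex.setLIntegral_inv_norm_sq_eq_top R₁ hR₁,
    ENNReal.mul_top (by positivity)] at htop
  exact htop.false

section CauchyTransform

variable {ρ : Measure ℂ} {g : ℂ → ℂ}

lemma enorm_remainder_integrand_le (hg : ∀ w, ‖g w‖ ≤ 1) (z w : ℂ) :
    ‖w ^ 2 * g w / (z ^ 2 * (w - z))‖ₑ ≤ ENNReal.ofReal (cauchyRemainderKernel w z) := by
  rw [← ofReal_norm, cauchyRemainderKernel, norm_div, norm_mul, norm_mul, norm_pow, norm_pow]
  exact ENNReal.ofReal_le_ofReal (by gcongr; exact mul_le_of_le_one_right (by positivity) (hg w))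

variable (hg_meas : Measurable g) (hg : ∀ w, ‖g w‖ ≤ 1)
  (hfin : ∫⁻ z in {z : ℂ | 1 < ‖z‖}, ∫⁻ w, ENNReal.ofReal (cauchyRemainderKernel w z) ∂ρ < ⊤)
include hg_meas hg hfin

lemma integrableOn_cauchyRemainder [SFinite ρ] :
    IntegrableOn (fun z => ∫ w, w ^ 2 * g w / (z ^ 2 * (w - z)) ∂ρ) {z : ℂ | 1 < ‖z‖} := by
  have hmeas : Measurable fun p : ℂ × ℂ => p.2 ^ 2 * g p.2 / (p.1 ^ 2 * (p.2 - p.1)) := by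
    fun_prop
  refine ⟨hmeas.stronglyMeasurable.integral_prod_right'.aestronglyMeasurable,
    lt_of_le_of_lt (lintegral_mono fun z => ?_) hfin⟩
  exact (enorm_integral_le_lintegral_enorm _).trans
    (lintegral_mono (enorm_remainder_integrand_le hg z))

lemma cauchyTransform_ae_eq [IsFiniteMeasure ρ] (hwg : Integrable (fun w => w * g w) ρ) :
    (fun z => ∫ w, g w / (w - z) ∂ρ) =ᵐ[volume.restrict {z : ℂ | 1 < ‖z‖}] fun z =>
      -((∫ w, g w ∂ρ) / z + (∫ w, w * g w ∂ρ) / z ^ 2) +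
        ∫ w, w ^ 2 * g w / (z ^ 2 * (w - z)) ∂ρ := by
  have hgi : Integrable g ρ :=
    Integrable.of_bound hg_meas.aestronglyMeasurable 1 (.of_forall hg)
  have hfin_ae := ae_lt_top (Measurable.lintegral_prod_right'
    (f := fun p : ℂ × ℂ => ENNReal.ofReal (cauchyRemainderKernel p.2 p.1)) (by fun_prop)) hfin.ne
  filter_upwards [hfin_ae, ae_restrict_of_ae (ae_measure_singleton_eq_zero ρ volume),
    ae_restrict_mem (measurableSet_lt measurable_const measurable_norm)] with z hzfin hρz hz
  have hz0 : z ≠ 0 := norm_pos_iff.1 (one_pos.trans hz)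
  have hrem : Integrable (fun w => w ^ 2 * g w / (z ^ 2 * (w - z))) ρ :=
    ⟨(by fun_prop : Measurable fun w => w ^ 2 * g w / (z ^ 2 * (w - z))).aestronglyMeasurable,
      lt_of_le_of_lt (lintegral_mono (enorm_remainder_integrand_le hg z)) hzfin⟩
  -- The identity fails only at `w = z` (where `x / 0 = 0`), a `ρ`-null point.
  have hsplit : (fun w => g w / (w - z)) =ᵐ[ρ]
      fun w => -(g w / z + w * g w / z ^ 2) + w ^ 2 * g w / (z ^ 2 * (w - z)) := by
    filter_upwards [measure_eq_zero_iff_ae_notMem.1 hρz] with w hw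
    have hwz : w - z ≠ 0 := sub_ne_zero.2 (by simpa using hw)
    field_simp
    ring
  have hmain : Integrable (fun w => -(g w / z + w * g w / z ^ 2)) ρ :=
    ((hgi.div_const z).add (hwg.div_const _)).neg
  rw [integral_congr_ae hsplit, integral_add hmain hrem,
    integral_neg, integral_add (hgi.div_const z) (hwg.div_const _), integral_div, integral_div]

end CauchyTransform

/-- Let `μ` be a finite complex Borel measure on `ℂ` (polar decomposition `dμ = g dρ`,
`ρ = |μ|` finite positive, `‖g‖ = 1`) with `∫_{|z|>10} |z| log|z| d|μ|(z) < ∞`.  Set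
`A = ∫ dμ` and `B = ∫ w dμ(w)`.  Then the Cauchy transform `μ̂(z) = ∫ dμ(w)/(w-z)` is
absolutely integrable on `{|z|>1}` w.r.t. planar Lebesgue measure iff `A = 0` and `B = 0`. -/
theorem stmt4 (ρ : Measure ℂ) [IsFiniteMeasure ρ] (g : ℂ → ℂ)
    (hg_meas : Measurable g) (hg_norm : ∀ w, ‖g w‖ = 1)
    (hmu : IntegrableOn (fun w : ℂ => ‖w‖ * Real.log ‖w‖) {w : ℂ | 10 < ‖w‖} ρ) :
    IntegrableOn (fun z : ℂ => ∫ w, g w / (w - z) ∂ρ) {z : ℂ | 1 < ‖z‖} volume ↔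
      ((∫ w, g w ∂ρ) = 0 ∧ (∫ w, w * g w ∂ρ) = 0) := by
  have hg : ∀ w, ‖g w‖ ≤ 1 := fun w => (hg_norm w).le
  have hM := integrable_norm_mul_one_add_posLog (by norm_num) hmu
  have hwg : Integrable (fun w => w * g w) ρ :=
    hM.mono' (by fun_prop) (.of_forall fun w => by
      rw [norm_mul, hg_norm, mul_one]
      exact le_mul_of_one_le_right (norm_nonneg w) (le_add_of_nonneg_right posLog_nonneg))
  have hfin := lintegral_setLIntegral_cauchyRemainderKernel_lt_top hM
  rw [integrableOn_congr_fun_ae (cauchyTransform_ae_eq hg_meas hg hfin hwg), IntegrableOn,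
    integrable_add_iff_integrable_left' (integrableOn_cauchyRemainder hg_meas hg hfin)]
  exact integrable_neg_iff.trans (integrableOn_div_add_div_sq_iff _ _ 1)
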